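/- If Upd satisfies P1–P5 and P7, then there is a function V: {(x,y) : 0 < x ≤ y ≤ 1} → ℝ such that for every measure space M, probability measure Pr, and events A ⊆ B with Pr(A) > 0, the supremum over Pr' ∈ Upd(Pr,B) of Pr'(A)·Pr(B)/Pr(A) equals V(Pr(A), Pr(B)). That is, this supremum depends only on the values Pr(A) and Pr(B), not on the identity of M, A, B, or Pr. -/

import Mathlib

open MeasureTheory ProbabilityTheory Set
open scoped Classical NNReal ENNReal

noncomputable section

/-- A family of update functions, one for each measure space. -/
abbrev UpdFamily : Type 1 :=
  ∀ (W : Type) [MeasurableSpace W],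
    Set (ProbabilityMeasure W) → Set W → Set (ProbabilityMeasure W)

/-- Base condition: `Upd(X,B) = ∅` whenever every measure in `X` gives `B` probability 0. -/
def UpdBase (U : UpdFamily) : Prop :=
  ∀ (W : Type) [MeasurableSpace W] (X : Set (ProbabilityMeasure W)) (B : Set W),
    (∀ μ ∈ X, μ B = 0) → U W X B = ∅

/-- The conditional probability `Pr(A|B) = Pr(A ∩ B)/Pr(B)`. -/
def condProb {W : Type} [MeasurableSpace W] (μ : ProbabilityMeasure W) (A B : Set W) : ℝ≥0 :=
  μ (A ∩ B) / μ B

/-- The conditional probability measure `Pr(·|B)` (defined when `Pr(B) > 0`). -/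
def condPM {W : Type} [MeasurableSpace W] (μ : ProbabilityMeasure W) (B : Set W) :
    ProbabilityMeasure W :=
  if h : (μ : Measure W) B ≠ 0 then
    ⟨(μ : Measure W)[|B], cond_isProbabilityMeasure h⟩
  else μ

/-- Pushforward of a probability measure along a measurable map (`f*`). -/
def pushPM {W W' : Type} [MeasurableSpace W] [MeasurableSpace W']
    {f : W → W'} (hf : Measurable f) (μ : ProbabilityMeasure W) : ProbabilityMeasure W' :=
  μ.map hf.aemeasurable

/-- P1: every measure in `Upd(X,B)` assigns probability 1 to `B`. -/
def P1 (U : UpdFamily) : Prop :=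
  ∀ (W : Type) [MeasurableSpace W] (X : Set (ProbabilityMeasure W)) (B : Set W),
    MeasurableSet B → ∀ μ ∈ U W X B, μ B = 1

/-- P2: representation independence under measurable surjections. -/
def P2 (U : UpdFamily) : Prop :=
  ∀ (W W' : Type) [MeasurableSpace W] [MeasurableSpace W'] (f : W → W')
    (hf : Measurable f), Function.Surjective f →
    ∀ (X : Set (ProbabilityMeasure W)) (B : Set W'), MeasurableSet B →
      U W' (pushPM hf '' X) B = pushPM hf '' (U W X (f ⁻¹' B))

/-- P3: compositionality of updating. -/
def P3 (U : UpdFamily) : Prop :=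
  ∀ (W : Type) [MeasurableSpace W] (X : Set (ProbabilityMeasure W)) (B C : Set W),
    MeasurableSet B → MeasurableSet C → U W (U W X B) C = U W X (B ∩ C)

/-- P4: trivial update on sure evidence. -/
def P4 (U : UpdFamily) : Prop :=
  ∀ (W : Type) [MeasurableSpace W] (X : Set (ProbabilityMeasure W)) (B : Set W),
    MeasurableSet B → (∀ μ ∈ X, μ B = 1) → U W X B = X

/-- P5: pointwise union decomposition. -/
def P5 (U : UpdFamily) : Prop :=
  ∀ (W : Type) [MeasurableSpace W] (X : Set (ProbabilityMeasure W)) (B : Set W),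
    MeasurableSet B → U W X B = ⋃ μ ∈ X, U W {μ} B

/-- P6': singleton inputs yield at most one output measure. -/
def P6' (U : UpdFamily) : Prop :=
  ∀ (W : Type) [MeasurableSpace W] (μ : ProbabilityMeasure W) (B : Set W),
    MeasurableSet B → (U W {μ} B).Subsingleton

/-- P6'': bounded amplification relative to conditioning. -/
def P6'' (U : UpdFamily) : Prop :=
  ∀ (W : Type) [MeasurableSpace W] (μ : ProbabilityMeasure W), ∃ c : ℝ≥0,
    ∀ (A B : Set W), MeasurableSet A → MeasurableSet B →
      ∀ ν ∈ U W {μ} B, ν A ≤ c * condProb μ A B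

/-- P6: either P6' or P6'' holds. -/
def P6 (U : UpdFamily) : Prop := P6' U ∨ P6'' U

/-- P7: some non-sure evidence yields a nonempty update. -/
def P7 (U : UpdFamily) : Prop :=
  ∃ (W : Type) (_ : MeasurableSpace W) (X : Set (ProbabilityMeasure W)) (B : Set W),
    MeasurableSet B ∧ (∀ μ ∈ X, μ B ≠ 1) ∧ U W X B ≠ ∅

/-- Conditioning: `Upd_cond(X,B) = {Pr(·|B) : Pr ∈ X, Pr(B) > 0}`. -/
def updCond {W : Type} [MeasurableSpace W] (X : Set (ProbabilityMeasure W)) (B : Set W) :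
    Set (ProbabilityMeasure W) :=
  {ν | ∃ μ ∈ X, 0 < μ B ∧ ν = condPM μ B}

/-- Constraining: `Upd_constrain(X,B) = {Pr ∈ X : Pr(B) = 1}`. -/
def updConstrain {W : Type} [MeasurableSpace W] (X : Set (ProbabilityMeasure W)) (B : Set W) :
    Set (ProbabilityMeasure W) := {μ ∈ X | μ B = 1}

end

/-!
The map `W → M₃` sending `A`, `B \ A` and `Bᶜ` to `1`, `2` and `0` pushes `Pr` forward to
`Pr_{x,y}` with `x = Pr(A)`, `y = Pr(B)`; when it is surjective, P2 transports `Upd(Pr, B)` onto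
`Upd(Pr_{x,y}, {1, 2})` without changing the amplification of `A`, so `U(A, B)` is that of `{1}` on
`M₃`. In the degenerate cases the map is not surjective: if `Pr(B) = 1` both updates are trivial
by P4, and if `A = B` the point `2` is `Pr_{x,x}`-null, so by P3 and P4 the evidence `{1, 2}` may
be shrunk to `{1}`, and both sides are then transported to the two-point space.
-/

noncomputable section

namespace MeasureTheory.ProbabilityMeasure

variable {Ω : Type*} [MeasurableSpace Ω]

lemma apply_compl (μ : ProbabilityMeasure Ω) {s : Set Ω} (hs : MeasurableSet s) :
    μ sᶜ = 1 - μ s := by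
  have := prob_compl_eq_one_sub (μ := (μ : Measure Ω)) hs
  rw [← ennreal_coeFn_eq_coeFn_toMeasure, ← ennreal_coeFn_eq_coeFn_toMeasure] at this
  exact_mod_cast this

lemma apply_diff (μ : ProbabilityMeasure Ω) {s t : Set Ω} (hst : s ⊆ t) (hs : MeasurableSet s) :
    μ (t \ s) = μ t - μ s := by
  have := measure_sdiff (μ := (μ : Measure Ω)) hst hs.nullMeasurableSet (measure_ne_top _ _)
  simp only [← ennreal_coeFn_eq_coeFn_toMeasure] at this
  exact_mod_cast this

lemma apply_inter_compl_null (μ : ProbabilityMeasure Ω) {s N : Set Ω} (hN : μ N = 0) :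
    μ (Nᶜ ∩ s) = μ s := by
  rw [null_iff_toMeasure_null] at hN
  simp only [coeFn_def, inter_comm Nᶜ s,
    measure_inter_conull (μ := (μ : Measure Ω)) (by rwa [compl_compl])]

lemma ext_of_singleton [Countable Ω] [MeasurableSingletonClass Ω] {μ ν : ProbabilityMeasure Ω}
    (h : ∀ a, μ {a} = ν {a}) : μ = ν :=
  toMeasure_injective <| Measure.ext_of_singleton fun a => by
    simp only [← ennreal_coeFn_eq_coeFn_toMeasure, h]

end MeasureTheory.ProbabilityMeasure

lemma pushPM_apply {W W' : Type} [MeasurableSpace W] [MeasurableSpace W'] {f : W → W'}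
    (hf : Measurable f) (μ : ProbabilityMeasure W) {S : Set W'} (hS : MeasurableSet S) :
    pushPM hf μ S = μ (f ⁻¹' S) :=
  ProbabilityMeasure.map_apply μ hf.aemeasurable hS

def finPM {n : ℕ} (p : Fin n → ℝ≥0) (hp : ∑ i, p i = 1) : ProbabilityMeasure (Fin n) :=
  ⟨∑ i, (p i : ℝ≥0∞) • Measure.dirac i, ⟨by simp [← ENNReal.ofNNReal_finsetSum, hp]⟩⟩

lemma finPM_singleton {n : ℕ} (p : Fin n → ℝ≥0) (hp : ∑ i, p i = 1) (i : Fin n) :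
    finPM p hp {i} = p i := by
  simp [finPM, Measure.dirac_apply', Set.indicator_apply]

lemma pushPM_eq_finPM {W : Type} [MeasurableSpace W] {n : ℕ} {f : W → Fin n} (hf : Measurable f)
    (μ : ProbabilityMeasure W) (p : Fin n → ℝ≥0) (hp : ∑ i, p i = 1)
    (h : ∀ i, μ (f ⁻¹' {i}) = p i) : pushPM hf μ = finPM p hp :=
  ProbabilityMeasure.ext_of_singleton fun i => by
    rw [pushPM_apply hf μ (measurableSet_singleton i), finPM_singleton, h]

/-- The paper's `Pr_{x,y}` on `M₃ = {0, 1, 2}`. -/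
def threePointPM (x y : ℝ≥0) (hxy : x ≤ y) (hy : y ≤ 1) : ProbabilityMeasure (Fin 3) :=
  finPM ![1 - y, x, y - x] <| by
    simp [Fin.sum_univ_three, add_assoc, add_tsub_cancel_of_le hxy, tsub_add_cancel_of_le hy]

def twoPointPM (x : ℝ≥0) (hx : x ≤ 1) : ProbabilityMeasure (Fin 2) :=
  finPM ![1 - x, x] <| by simp [Fin.sum_univ_two, tsub_add_cancel_of_le hx]

section ThreePoint

variable {x y : ℝ≥0} (hxy : x ≤ y) (hy : y ≤ 1)

lemma threePointPM_one : threePointPM x y hxy hy {1} = x :=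
  finPM_singleton _ _ 1

lemma threePointPM_two : threePointPM x y hxy hy {2} = y - x :=
  finPM_singleton _ _ 2

lemma threePointPM_one_two : threePointPM x y hxy hy {1, 2} = y := by
  have h : ({1, 2} : Set (Fin 3)) = {0}ᶜ := by ext i; fin_cases i <;> simp
  rw [h, ProbabilityMeasure.apply_compl _ (measurableSet_singleton 0), threePointPM,
    finPM_singleton]
  exact tsub_tsub_cancel_of_le hy

end ThreePoint

section Indicators

variable {α : Type*} {A B : Set α}

def indicatorFin2 (A : Set α) (a : α) : Fin 2 := if a ∈ A then 1 else 0

def indicatorFin3 (A B : Set α) (a : α) : Fin 3 := if a ∈ A then 1 else if a ∈ B then 2 else 0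

lemma indicatorFin2_preimage_zero : indicatorFin2 A ⁻¹' {0} = Aᶜ := by
  ext a; by_cases a ∈ A <;> simp [indicatorFin2, *]

lemma indicatorFin2_preimage_one : indicatorFin2 A ⁻¹' {1} = A := by
  ext a; by_cases a ∈ A <;> simp [indicatorFin2, *]

lemma indicatorFin3_preimage_zero (hAB : A ⊆ B) : indicatorFin3 A B ⁻¹' {0} = Bᶜ := by
  ext a; by_cases ha : a ∈ A
  · simp [indicatorFin3, ha, hAB ha]
  · by_cases a ∈ B <;> simp [indicatorFin3, *]

lemma indicatorFin3_preimage_one : indicatorFin3 A B ⁻¹' {1} = A := by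
  ext a; by_cases a ∈ A <;> by_cases a ∈ B <;> simp [indicatorFin3, *]

lemma indicatorFin3_preimage_two : indicatorFin3 A B ⁻¹' {2} = B \ A := by
  ext a; by_cases a ∈ A <;> by_cases a ∈ B <;> simp [indicatorFin3, *]

lemma indicatorFin3_preimage_one_two (hAB : A ⊆ B) : indicatorFin3 A B ⁻¹' {1, 2} = B := by
  ext a; by_cases ha : a ∈ A
  · simp [indicatorFin3, ha, hAB ha]
  · by_cases a ∈ B <;> simp [indicatorFin3, *]

lemma indicatorFin2_surjective (hA : A.Nonempty) (hAc : Aᶜ.Nonempty) :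
    Function.Surjective (indicatorFin2 A) := by
  obtain ⟨a, ha⟩ := hA
  obtain ⟨b, hb⟩ := hAc
  intro i; fin_cases i
  · exact ⟨b, by simp [indicatorFin2, hb.out]⟩
  · exact ⟨a, by simp [indicatorFin2, ha]⟩

lemma indicatorFin3_surjective (hAB : A ⊆ B) (hA : A.Nonempty) (hBA : (B \ A).Nonempty) (hBc : Bᶜ.Nonempty) :
    Function.Surjective (indicatorFin3 A B) := by
  obtain ⟨a, ha⟩ := hA
  obtain ⟨b, hbB, hbA⟩ := hBA
  obtain ⟨c, hc⟩ := hBc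
  intro i; fin_cases i
  · exact ⟨c, by simp [indicatorFin3, hc.out, mt (@hAB c) hc.out]⟩
  · exact ⟨a, by simp [indicatorFin3, ha]⟩
  · exact ⟨b, by simp [indicatorFin3, hbA, hbB]⟩

variable [MeasurableSpace α]

lemma measurable_indicatorFin2 (hA : MeasurableSet A) : Measurable (indicatorFin2 A) :=
  measurable_const.ite hA measurable_const

lemma measurable_indicatorFin3 (hA : MeasurableSet A) (hB : MeasurableSet B) :
    Measurable (indicatorFin3 A B) :=
  measurable_const.ite hA (measurable_const.ite hB measurable_const)

end Indicators

section Pushforward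

variable {W : Type} [MeasurableSpace W] (Pr : ProbabilityMeasure W) {A B : Set W}

lemma pushPM_indicatorFin2 (hA : MeasurableSet A) :
    pushPM (measurable_indicatorFin2 hA) Pr = twoPointPM (Pr A) (Pr.apply_le_one A) := by
  refine pushPM_eq_finPM _ _ _ _ fun i => ?_
  fin_cases i
  · simp [indicatorFin2_preimage_zero, Pr.apply_compl hA]
  · simp [indicatorFin2_preimage_one]

lemma pushPM_indicatorFin3 (hA : MeasurableSet A) (hB : MeasurableSet B) (hAB : A ⊆ B) :
    pushPM (measurable_indicatorFin3 hA hB) Pr =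
      threePointPM (Pr A) (Pr B) (Pr.apply_mono hAB) (Pr.apply_le_one B) := by
  refine pushPM_eq_finPM _ _ _ _ fun i => ?_
  fin_cases i
  · simp [indicatorFin3_preimage_zero hAB, Pr.apply_compl hB]
  · simp [indicatorFin3_preimage_one]
  · simp [indicatorFin3_preimage_two, Pr.apply_diff hAB hA]

end Pushforward

/-- The paper's `U(A, B)`, with `sSup ∅ = ⊥` playing the role of `−∞`. -/
def updAmplification (U : UpdFamily) (W : Type) [MeasurableSpace W] (Pr : ProbabilityMeasure W)
    (A B : Set W) : EReal :=
  sSup {x : EReal | ∃ ν ∈ U W {Pr} B, x = (((ν A * Pr B / Pr A : ℝ≥0) : ℝ) : EReal)}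

section Amplification

variable (U : UpdFamily) {W : Type} [MeasurableSpace W]

lemma updAmplification_pushPM (h2 : P2 U) {W' : Type} [MeasurableSpace W'] {f : W → W'}
    (hf : Measurable f) (hsurj : Function.Surjective f) (μ : ProbabilityMeasure W)
    {S T : Set W'} (hS : MeasurableSet S) (hT : MeasurableSet T) :
    updAmplification U W' (pushPM hf μ) S T = updAmplification U W μ (f ⁻¹' S) (f ⁻¹' T) := by
  have hU := h2 W W' f hf hsurj {μ} T hT
  rw [image_singleton] at hU
  simp only [updAmplification, hU, exists_mem_image, pushPM_apply hf _ hS, pushPM_apply hf _ hT]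

lemma upd_inter_compl_null (h3 : P3 U) (h4 : P4 U) (μ : ProbabilityMeasure W) {B N : Set W}
    (hB : MeasurableSet B) (hN : MeasurableSet N) (h : μ N = 0) :
    U W {μ} (Nᶜ ∩ B) = U W {μ} B := by
  rw [← h3 W {μ} Nᶜ B hN.compl hB, h4 W {μ} Nᶜ hN.compl]
  simp [μ.apply_compl hN, h]

lemma updAmplification_inter_compl_null (h3 : P3 U) (h4 : P4 U) (μ : ProbabilityMeasure W)
    {A B N : Set W} (hB : MeasurableSet B) (hN : MeasurableSet N) (h : μ N = 0) :
    updAmplification U W μ A (Nᶜ ∩ B) = updAmplification U W μ A B := by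
  simp only [updAmplification, upd_inter_compl_null U h3 h4 μ hB hN h, μ.apply_inter_compl_null h]

lemma updAmplification_of_apply_eq_one (h4 : P4 U) (Pr : ProbabilityMeasure W) {A B : Set W}
    (hB : MeasurableSet B) (hB1 : Pr B = 1) :
    updAmplification U W Pr A B = (((Pr A * Pr B / Pr A : ℝ≥0) : ℝ) : EReal) := by
  rw [updAmplification, h4 W {Pr} B hB (by simpa)]
  simp

end Amplification

theorem updAmplification_eq_threePointPM (U : UpdFamily) (h2 : P2 U) (h3 : P3 U) (h4 : P4 U)
    {W : Type} [MeasurableSpace W] (Pr : ProbabilityMeasure W) {A B : Set W}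
    (hA : MeasurableSet A) (hB : MeasurableSet B) (hAB : A ⊆ B) (hA0 : 0 < Pr A) :
    updAmplification U W Pr A B = updAmplification U (Fin 3)
      (threePointPM (Pr A) (Pr B) (Pr.apply_mono hAB) (Pr.apply_le_one B)) {1} {1, 2} := by
  have hxy := Pr.apply_mono hAB
  have hy := Pr.apply_le_one B
  by_cases hB1 : Pr B = 1
  · rw [updAmplification_of_apply_eq_one U h4 Pr hB hB1,
      updAmplification_of_apply_eq_one U h4 _ .of_discrete (by rw [threePointPM_one_two, hB1]),
      threePointPM_one, threePointPM_one_two]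
  have hAne : A.Nonempty := nonempty_iff_ne_empty.2 fun h => hA0.ne' (by simp [h])
  have hBc : Bᶜ.Nonempty := nonempty_compl.2 fun h => hB1 (by simp [h])
  rcases (B \ A).eq_empty_or_nonempty with hBA | hBA
  · obtain rfl : A = B := subset_antisymm hAB (sdiff_eq_empty.1 hBA)
    have h3to2 := pushPM_indicatorFin2 (threePointPM (Pr A) (Pr A) hxy hy)
      (measurableSet_singleton 1)
    simp only [threePointPM_one] at h3to2
    have h12 : ({2}ᶜ ∩ {1, 2} : Set (Fin 3)) = {1} := by ext i; fin_cases i <;> simp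
    calc updAmplification U W Pr A A
        = updAmplification U (Fin 2) (twoPointPM (Pr A) hy) {1} {1} := by
          rw [← pushPM_indicatorFin2 Pr hA, updAmplification_pushPM U h2 _
            (indicatorFin2_surjective hAne hBc) _ .of_discrete .of_discrete,
            indicatorFin2_preimage_one]
      _ = updAmplification U (Fin 3) (threePointPM (Pr A) (Pr A) hxy hy) {1} {1} := by
          rw [← h3to2, updAmplification_pushPM U h2 _
            (indicatorFin2_surjective (singleton_nonempty 1) ⟨0, by simp⟩) _ .of_discrete
            .of_discrete, indicatorFin2_preimage_one]
      _ = updAmplification U (Fin 3) (threePointPM (Pr A) (Pr A) hxy hy) {1} {1, 2} := by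
          rw [← h12, updAmplification_inter_compl_null U h3 h4 _ .of_discrete .of_discrete
            (by rw [threePointPM_two, tsub_self])]
  · rw [← pushPM_indicatorFin3 Pr hA hB hAB, updAmplification_pushPM U h2 _
        (indicatorFin3_surjective hAB hAne hBA hBc) _ .of_discrete .of_discrete,
      indicatorFin3_preimage_one, indicatorFin3_preimage_one_two hAB]

end

theorem stmt18_general (U : UpdFamily) (h2 : P2 U) (h3 : P3 U) (h4 : P4 U) :
    ∃ V : ℝ≥0 → ℝ≥0 → EReal,
      ∀ (W : Type) [MeasurableSpace W] (Pr : ProbabilityMeasure W) (A B : Set W),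
        MeasurableSet A → MeasurableSet B → A ⊆ B → 0 < Pr A →
        sSup {x : EReal | ∃ ν ∈ U W {Pr} B, x = (((ν A * Pr B / Pr A : ℝ≥0) : ℝ) : EReal)}
          = V (Pr A) (Pr B) := by
  refine ⟨fun x y => if h : x ≤ y ∧ y ≤ 1 then
    updAmplification U (Fin 3) (threePointPM x y h.1 h.2) {1} {1, 2} else 0, ?_⟩
  intro W _ Pr A B hA hB hAB hA0
  dsimp only
  rw [dif_pos ⟨Pr.apply_mono hAB, Pr.apply_le_one B⟩]
  exact updAmplification_eq_threePointPM U h2 h3 h4 Pr hA hB hAB hA0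

/-- under P1–P5 and P7, the supremum `U(A,B)` depends only on the values
`Pr(A)` and `Pr(B)`. -/
theorem stmt18 (U : UpdFamily) (hbase : UpdBase U) (h1 : P1 U) (h2 : P2 U) (h3 : P3 U)
    (h4 : P4 U) (h5 : P5 U) (h7 : P7 U) :
    ∃ V : ℝ≥0 → ℝ≥0 → EReal,
      ∀ (W : Type) [MeasurableSpace W] (Pr : ProbabilityMeasure W) (A B : Set W),
        MeasurableSet A → MeasurableSet B → A ⊆ B → 0 < Pr A →
        sSup {x : EReal | ∃ ν ∈ U W {Pr} B, x = (((ν A * Pr B / Pr A : ℝ≥0) : ℝ) : EReal)}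
          = V (Pr A) (Pr B) :=
  stmt18_general U h2 h3 h4
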